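/- arXiv:math/0508081 — 2 statements merged into one kernel-verified Lean document; each statement's English description precedes it below -/
import Mathlib

section
/- Let X be a loopless graph on n vertices and τ the least eigenvalue of its adjacency matrix. For an independent set S of size s, define d̄_S = (1/s)·Σ_{i∈S} d_i and k_S = 2·d̄_S − (1/n)·Σ_{i∈V} d_i. If k_S > τ, then s ≤ n·(−τ)/(k_S − τ). -/
open Matrix Finset

/-! Apply the Rayleigh bound `τ ‖x‖² ≤ xᵀ A x` to `x = n χ_S - s 𝟙`. As `S` is independent and `A`
has zero diagonal, `χ_Sᵀ A χ_S = 0`, so `xᵀ A x = s² Σ_V d_i - 2 n s Σ_S d_i = -n s² k_S`, while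
`‖x‖² = n s (n - s)`. Dividing by `n s` gives `τ (n - s) ≤ -s k_S`, that is `s (k_S - τ) ≤ -n τ`. -/

namespace Matrix

variable {ι : Type*} [Fintype ι]

theorem IsHermitian.mul_dotProduct_self_le_dotProduct_mulVec [DecidableEq ι]
    {A : Matrix ι ι ℝ} (hA : A.IsHermitian) {τ : ℝ}
    (hτ : ∀ (μ : ℝ) (v : ι → ℝ), v ≠ 0 → A *ᵥ v = μ • v → τ ≤ μ) (x : ι → ℝ) :
    τ * (x ⬝ᵥ x) ≤ x ⬝ᵥ (A *ᵥ x) := by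
  have hB : (A - τ • 1).IsHermitian := hA.sub (by simp [IsHermitian])
  have hBpsd : (A - τ • 1).PosSemidef := by
    refine hB.posSemidef_iff_eigenvalues_nonneg.mpr fun i => ?_
    set v := (hB.eigenvectorBasis i).ofLp
    have hv : v ≠ 0 := fun h =>
      hB.eigenvectorBasis.orthonormal.ne_zero i (by rw [← WithLp.ofLp_eq_zero]; exact h)
    have hAv : A *ᵥ v = (hB.eigenvalues i + τ) • v := by
      have := hB.mulVec_eigenvectorBasis i
      rw [sub_mulVec, smul_mulVec, one_mulVec, sub_eq_iff_eq_add] at this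
      rw [this, add_smul]
    simpa using hτ _ v hv hAv
  have := hBpsd.dotProduct_mulVec_nonneg x
  simp only [star_trivial, sub_mulVec, smul_mulVec, one_mulVec, dotProduct_sub,
    dotProduct_smul, smul_eq_mul] at this
  linarith

theorem IsSymm.sub_smul_dotProduct_mulVec_sub_smul {R : Type*} [CommRing R]
    {A : Matrix ι ι R} (hA : A.IsSymm) (c d : R) (u w : ι → R) :
    (c • u - d • w) ⬝ᵥ (A *ᵥ (c • u - d • w)) =
      c ^ 2 * (u ⬝ᵥ A *ᵥ u) - 2 * c * d * (u ⬝ᵥ A *ᵥ w) + d ^ 2 * (w ⬝ᵥ A *ᵥ w) := by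
  have hwu : w ⬝ᵥ A *ᵥ u = u ⬝ᵥ A *ᵥ w := by rw [← dotProduct_transpose_mulVec, hA.eq]
  simp only [mulVec_sub, mulVec_smul, dotProduct_sub, sub_dotProduct, dotProduct_smul,
    smul_dotProduct, smul_eq_mul, hwu]
  ring

section indicator

variable (S : Finset ι)

theorem dotProduct_indicator_one (v : ι → ℝ) :
    v ⬝ᵥ (S : Set ι).indicator 1 = ∑ i ∈ S, v i := by
  simp_rw [dotProduct, ← Set.indicator_mul_right, Pi.one_apply, mul_one]
  exact sum_indicator_subset v (subset_univ S)

theorem indicator_one_dotProduct (v : ι → ℝ) :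
    (S : Set ι).indicator 1 ⬝ᵥ v = ∑ i ∈ S, v i := by
  rw [dotProduct_comm, dotProduct_indicator_one]

theorem indicator_one_dotProduct_mulVec_indicator_one_eq_zero {A : Matrix ι ι ℝ}
    (hS : ∀ i ∈ S, ∀ j ∈ S, A i j = 0) :
    (S : Set ι).indicator 1 ⬝ᵥ (A *ᵥ (S : Set ι).indicator 1) = 0 := by
  simp only [indicator_one_dotProduct, mulVec, dotProduct_indicator_one]
  exact sum_eq_zero fun i hi => sum_eq_zero fun j hj => hS i hi j hj

theorem smul_indicator_one_sub_smul_one_dotProduct_self [DecidableEq ι] (c d : ℝ) :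
    (c • (S : Set ι).indicator 1 - d • 1) ⬝ᵥ (c • (S : Set ι).indicator 1 - d • 1) =
      c ^ 2 * #S - 2 * c * d * #S + d ^ 2 * Fintype.card ι := by
  have := isSymm_one.sub_smul_dotProduct_mulVec_sub_smul c d ((S : Set ι).indicator 1) 1
  simp only [one_mulVec] at this
  rw [this, indicator_one_dotProduct, indicator_one_dotProduct, sum_indicator_subset _ subset_rfl,
    one_dotProduct_one]
  simp

theorem IsSymm.smul_indicator_one_sub_smul_one_dotProduct_mulVec {A : Matrix ι ι ℝ}
    (hA : A.IsSymm) (hS : ∀ i ∈ S, ∀ j ∈ S, A i j = 0) (c d : ℝ) :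
    (c • (S : Set ι).indicator 1 - d • 1) ⬝ᵥ (A *ᵥ (c • (S : Set ι).indicator 1 - d • 1)) =
      -2 * c * d * ∑ i ∈ S, ∑ j, A i j + d ^ 2 * ∑ i, ∑ j, A i j := by
  rw [hA.sub_smul_dotProduct_mulVec_sub_smul,
    indicator_one_dotProduct_mulVec_indicator_one_eq_zero S hS, indicator_one_dotProduct]
  simp only [mulVec, dotProduct_one, one_dotProduct]
  ring

end indicator

end Matrix

theorem stmt2_general (n : ℕ)
    (A : Matrix (Fin n) (Fin n) ℝ) (hsym : A.IsSymm)
    (hloop : ∀ i, A i i = 0)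
    (τ : ℝ)
    (hτmin : ∀ (μ : ℝ) (v : Fin n → ℝ), v ≠ 0 → A.mulVec v = μ • v → τ ≤ μ)
    (S : Finset (Fin n)) (hSne : S.Nonempty)
    (hind : ∀ i ∈ S, ∀ j ∈ S, i ≠ j → A i j = 0)
    (dbar kS : ℝ)
    (hdbar : dbar = (∑ i ∈ S, ∑ j, A i j) / S.card)
    (hkS : kS = 2 * dbar - (∑ i, ∑ j, A i j) / n)
    (hgt : kS > τ) :
    (S.card : ℝ) ≤ n * (-τ) / (kS - τ) := by
  set s : ℝ := (#S : ℝ)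
  have hs : 0 < s := Nat.cast_pos.mpr hSne.card_pos
  have hn : 0 < (n : ℝ) :=
    hs.trans_le (Nat.cast_le.mpr ((card_le_univ S).trans_eq (Fintype.card_fin n)))
  have hS : ∀ i ∈ S, ∀ j ∈ S, A i j = 0 := fun i hi j hj => by
    obtain rfl | hij := eq_or_ne i j
    exacts [hloop i, hind i hi j hj hij]
  have key := (isHermitian_iff_isSymm.mpr hsym).mul_dotProduct_self_le_dotProduct_mulVec hτmin
    ((n : ℝ) • (S : Set (Fin n)).indicator 1 - s • 1)
  rw [smul_indicator_one_sub_smul_one_dotProduct_self, Fintype.card_fin,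
    hsym.smul_indicator_one_sub_smul_one_dotProduct_mulVec S hS] at key
  set dS := ∑ i ∈ S, ∑ j, A i j
  set e := ∑ i, ∑ j, A i j
  have hkS' : n * s * (s * kS) = 2 * n * s * dS - s ^ 2 * e := by
    rw [hkS, hdbar]
    field_simp
  rw [le_div_iff₀ (sub_pos.mpr hgt)]
  refine le_of_mul_le_mul_left ?_ (mul_pos hn hs)
  linear_combination key + hkS'

/-- Ratio bound for non-regular loopless graphs: if `k_S = 2·d̄_S − (average degree) > τ`
then `s ≤ n·(−τ)/(k_S − τ)`. -/
theorem stmt2 (n : ℕ) (hn : 0 < n)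
    (A : Matrix (Fin n) (Fin n) ℝ) (hsym : A.IsSymm)
    (h01 : ∀ i j, A i j = 0 ∨ A i j = 1) (hloop : ∀ i, A i i = 0)
    (τ : ℝ)
    (hτeig : ∃ v : Fin n → ℝ, v ≠ 0 ∧ A.mulVec v = τ • v)
    (hτmin : ∀ (μ : ℝ) (v : Fin n → ℝ), v ≠ 0 → A.mulVec v = μ • v → τ ≤ μ)
    (S : Finset (Fin n)) (hSne : S.Nonempty)
    (hind : ∀ i ∈ S, ∀ j ∈ S, i ≠ j → A i j = 0)
    (dbar kS : ℝ)
    (hdbar : dbar = (∑ i ∈ S, ∑ j, A i j) / S.card)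
    (hkS : kS = 2 * dbar - (∑ i, ∑ j, A i j) / n)
    (hgt : kS > τ) :
    (S.card : ℝ) ≤ n * (-τ) / (kS - τ) :=
  stmt2_general n A hsym hloop τ hτmin S hSne hind dbar kS hdbar hkS hgt
end

section
/- Let X be a (q+1)-regular graph on n = q³+q²+q+1 vertices with loops, with least adjacency eigenvalue −sqrt(2q) and exactly q²+1 looped vertices (a polarity graph of the generalized quadrangle W(q)). Then every independent set S satisfies |S| ≤ (sqrt(2q) + sqrt(2q + 4(q²+1)(q+sqrt(2q)+1)/(q³+q²+q+1))) / (2(q+sqrt(2q)+1)/(q³+q²+q+1)). -/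
/-!
Since every eigenvalue of the symmetric matrix `A` is at least `-τ`, the form
`x ↦ xᵀ A x + τ xᵀ x` is positive semidefinite. Evaluated at `x = n χ_S - |S| 𝟙`, where `χ_S` is
the indicator of the independent set `S`, the off-diagonal entries inside `S` vanish and only the
loops of `S` survive, giving `(k + τ) |S|² ≤ n (τ |S| + #loops in S)`. Solving this quadratic
inequality in `|S|` with `k = q + 1`, `τ = √(2q)` and at most `q² + 1` loops gives the bound.
-/

open Matrix Finset

namespace Matrix

variable {ι : Type*} [Fintype ι]

lemma smul_dotProduct_self_le_dotProduct_mulVec [DecidableEq ι] {A : Matrix ι ι ℝ}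
    (hA : A.IsSymm) {m : ℝ}
    (hm : ∀ (μ : ℝ) (v : ι → ℝ), v ≠ 0 → A *ᵥ v = μ • v → m ≤ μ) (x : ι → ℝ) :
    m * (x ⬝ᵥ x) ≤ x ⬝ᵥ (A *ᵥ x) := by
  have hB : (A - m • 1).IsHermitian := by
    simp [IsHermitian, conjTranspose_eq_transpose_of_trivial, transpose_sub, hA.eq]
  have hpsd : (A - m • 1).PosSemidef := by
    refine hB.posSemidef_iff_eigenvalues_nonneg.mpr fun i => ?_
    set v : ι → ℝ := ⇑(hB.eigenvectorBasis i)
    have hv : v ≠ 0 := fun h =>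
      hB.eigenvectorBasis.orthonormal.ne_zero i (by ext j; simpa using congrFun h j)
    have hAv : A *ᵥ v = (hB.eigenvalues i + m) • v := by
      have := hB.mulVec_eigenvectorBasis i
      rw [sub_mulVec, smul_mulVec, one_mulVec, sub_eq_iff_eq_add] at this
      rw [add_smul, ← this]
    have := hm _ v hv hAv
    simp only [Pi.zero_apply]
    linarith
  have := hpsd.dotProduct_mulVec_nonneg x
  simp only [star_trivial, sub_mulVec, smul_mulVec, one_mulVec, dotProduct_sub,
    dotProduct_smul, smul_eq_mul] at this
  linarith

lemma mulVec_one_eq_smul_of_row_sums {A : Matrix ι ι ℝ} {k : ℝ} (hrow : ∀ i, ∑ j, A i j = k) :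
    A *ᵥ 1 = k • 1 := by
  ext i
  simp [mulVec, dotProduct, hrow]

end Matrix

variable {ι : Type*} [Fintype ι] [DecidableEq ι]

lemma indicator_dotProduct (S : Finset ι) (v : ι → ℝ) :
    (fun i => if i ∈ S then (1 : ℝ) else 0) ⬝ᵥ v = ∑ i ∈ S, v i := by
  simp [dotProduct, Finset.sum_ite_mem]

lemma indicator_dotProduct_mulVec_indicator {A : Matrix ι ι ℝ} {S : Finset ι}
    (hS : ∀ i ∈ S, ∀ j ∈ S, i ≠ j → A i j = 0) :
    (fun i => if i ∈ S then 1 else 0) ⬝ᵥ (A *ᵥ fun i => if i ∈ S then 1 else 0) =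
      ∑ i ∈ S, A i i := by
  rw [indicator_dotProduct]
  refine Finset.sum_congr rfl fun i hi => ?_
  rw [mulVec, dotProduct_comm, indicator_dotProduct]
  exact Finset.sum_eq_single_of_mem i hi fun j hj hji => hS i hi j hj hji.symm

theorem card_sq_mul_le_of_eigenvalue_ge {A : Matrix ι ι ℝ} (hA : A.IsSymm) {k τ : ℝ}
    (hrow : ∀ i, ∑ j, A i j = k)
    (hmin : ∀ (μ : ℝ) (v : ι → ℝ), v ≠ 0 → A *ᵥ v = μ • v → -τ ≤ μ)
    {S : Finset ι} (hS : ∀ i ∈ S, ∀ j ∈ S, i ≠ j → A i j = 0) :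
    (k + τ) * (#S : ℝ) ^ 2 ≤ Fintype.card ι * (τ * #S + ∑ i ∈ S, A i i) := by
  set n : ℝ := (Fintype.card ι : ℝ)
  set a : ℝ := (#S : ℝ)
  set χ : ι → ℝ := fun i => if i ∈ S then 1 else 0
  have hχχ : χ ⬝ᵥ χ = a := by simp [χ, a, indicator_dotProduct]
  have hχ1 : χ ⬝ᵥ 1 = a := by simp [χ, a, indicator_dotProduct]
  have h11 : (1 : ι → ℝ) ⬝ᵥ 1 = n := by simp [n]
  have hA1 := mulVec_one_eq_smul_of_row_sums hrow
  have h1Aχ : (1 : ι → ℝ) ⬝ᵥ (A *ᵥ χ) = χ ⬝ᵥ (A *ᵥ 1) := by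
    rw [dotProduct_mulVec, ← mulVec_transpose, hA.eq, dotProduct_comm]
  have hχAχ := indicator_dotProduct_mulVec_indicator hS
  have hform := smul_dotProduct_self_le_dotProduct_mulVec hA hmin (n • χ - a • 1)
  simp only [mulVec_sub, mulVec_smul, dotProduct_sub, sub_dotProduct, dotProduct_smul,
    smul_dotProduct, smul_eq_mul, h1Aχ, hA1] at hform
  rw [dotProduct_comm 1 χ, hχχ, hχ1, h11, hχAχ] at hform
  obtain hι | hι := isEmpty_or_nonempty ι
  · simp [a, n, Finset.eq_empty_of_isEmpty S]
  have hn : 0 < n := by simp [n, Fintype.card_pos]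
  have key : 0 ≤ n * (n * (τ * a + ∑ i ∈ S, A i i) - (k + τ) * a ^ 2) := by linarith
  exact sub_nonneg.mp (nonneg_of_mul_nonneg_right key hn)

lemma le_quadratic_root {a b c s : ℝ} (hc : 0 < c) (h : c * a ^ 2 ≤ b * a + s) :
    a ≤ (b + √(b ^ 2 + 4 * c * s)) / (2 * c) := by
  rw [le_div_iff₀ (by positivity)]
  have : (2 * c * a - b) ^ 2 ≤ b ^ 2 + 4 * c * s := by nlinarith
  linarith [le_abs_self (2 * c * a - b), Real.abs_le_sqrt this]

theorem card_le_of_eigenvalue_ge [Nonempty ι] {A : Matrix ι ι ℝ} (hA : A.IsSymm) {k τ s : ℝ}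
    (hrow : ∀ i, ∑ j, A i j = k)
    (hmin : ∀ (μ : ℝ) (v : ι → ℝ), v ≠ 0 → A *ᵥ v = μ • v → -τ ≤ μ) (hkτ : 0 < k + τ)
    {S : Finset ι} (hS : ∀ i ∈ S, ∀ j ∈ S, i ≠ j → A i j = 0) (hloops : ∑ i ∈ S, A i i ≤ s) :
    (#S : ℝ) ≤ (τ + √(τ ^ 2 + 4 * ((k + τ) / Fintype.card ι) * s)) /
      (2 * ((k + τ) / Fintype.card ι)) := by
  have hn : (0 : ℝ) < Fintype.card ι := by simp [Fintype.card_pos]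
  refine le_quadratic_root (div_pos hkτ hn) ?_
  rw [div_mul_eq_mul_div, div_le_iff₀ hn]
  nlinarith [card_sq_mul_le_of_eigenvalue_ge hA hrow hmin hS]

theorem stmt16_general (q : ℕ) (n : ℕ) (hn : n = q ^ 3 + q ^ 2 + q + 1)
    (A : Matrix (Fin n) (Fin n) ℝ) (hsym : A.IsSymm)
    (h01 : ∀ i j, A i j = 0 ∨ A i j = 1)
    (hreg : ∀ i, ∑ j, A i j = (q : ℝ) + 1)
    (hloops : (∑ i, A i i) = (q : ℝ) ^ 2 + 1)
    (hτmin : ∀ (μ : ℝ) (v : Fin n → ℝ), v ≠ 0 → A.mulVec v = μ • v →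
      -Real.sqrt (2 * q) ≤ μ)
    (S : Finset (Fin n)) (hind : ∀ i ∈ S, ∀ j ∈ S, i ≠ j → A i j = 0) :
    (S.card : ℝ) ≤
      (Real.sqrt (2 * q) + Real.sqrt (2 * (q : ℝ) + 4 * ((q : ℝ) ^ 2 + 1)
          * ((q : ℝ) + Real.sqrt (2 * q) + 1) / ((q : ℝ) ^ 3 + q ^ 2 + q + 1)))
        / (2 * ((q : ℝ) + Real.sqrt (2 * q) + 1)
          / ((q : ℝ) ^ 3 + q ^ 2 + q + 1)) := by
  have : Nonempty (Fin n) := ⟨⟨0, by omega⟩⟩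
  have hdiag : ∑ i ∈ S, A i i ≤ (q : ℝ) ^ 2 + 1 :=
    hloops ▸ sum_le_univ_sum_of_nonneg fun i => by rcases h01 i i with h | h <;> simp [h]
  have bound := card_le_of_eigenvalue_ge hsym hreg hτmin (by positivity) hind hdiag
  have hcard : (Fintype.card (Fin n) : ℝ) = (q : ℝ) ^ 3 + q ^ 2 + q + 1 := by
    simp [hn]
  rw [hcard, Real.sq_sqrt (by positivity)] at bound
  convert bound using 3
  · congr 1; ring
  · ring

/-- Bound for polarity graphs of the generalized quadrangle `W(q)`:
`(q+1)`-regular on `n = q³+q²+q+1` vertices, `q²+1` looped vertices, least adjacency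
eigenvalue `−√(2q)`; every independent set satisfies the stated bound. -/
theorem stmt16 (q : ℕ) (hq : 2 ≤ q) (n : ℕ) (hn : n = q ^ 3 + q ^ 2 + q + 1)
    (A : Matrix (Fin n) (Fin n) ℝ) (hsym : A.IsSymm)
    (h01 : ∀ i j, A i j = 0 ∨ A i j = 1)
    (hreg : ∀ i, ∑ j, A i j = (q : ℝ) + 1)
    (hloops : (∑ i, A i i) = (q : ℝ) ^ 2 + 1)
    (hτeig : ∃ v : Fin n → ℝ, v ≠ 0 ∧ A.mulVec v = (-Real.sqrt (2 * q)) • v)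
    (hτmin : ∀ (μ : ℝ) (v : Fin n → ℝ), v ≠ 0 → A.mulVec v = μ • v →
      -Real.sqrt (2 * q) ≤ μ)
    (S : Finset (Fin n)) (hind : ∀ i ∈ S, ∀ j ∈ S, i ≠ j → A i j = 0) :
    (S.card : ℝ) ≤
      (Real.sqrt (2 * q) + Real.sqrt (2 * (q : ℝ) + 4 * ((q : ℝ) ^ 2 + 1)
          * ((q : ℝ) + Real.sqrt (2 * q) + 1) / ((q : ℝ) ^ 3 + q ^ 2 + q + 1)))
        / (2 * ((q : ℝ) + Real.sqrt (2 * q) + 1)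
          / ((q : ℝ) ^ 3 + q ^ 2 + q + 1)) :=
  stmt16_general q n hn A hsym h01 hreg hloops hτmin S hind
end
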